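/- (FIFO-Buffer Proximity) Let ν_t = (1/K)∑_{h=0}^{K-1} d^{π_{t-h}} be the average of the occupancy measures of the K most recent policies, and Δ_τ = sup_s TV(π_{τ+1}(·|s), π_τ(·|s)). Then TV(ν_t, d^{π_t}) ≤ (γ/(1-γ)) ∑_{j=0}^{K-1} ((K-j)/K) Δ_{t-j}, and in particular TV(ν_t, d^{π_t}) ≤ (γ/(1-γ)) ∑_{j=0}^{K-1} Δ_{t-j}. -/

import Mathlib

open scoped BigOperators

noncomputable section

/-- Total variation distance between two functions (mass functions) on a finite set. -/
def tv {X : Type*} [Fintype X] (p q : X → ℝ) : ℝ := (1 / 2) * ∑ x, |p x - q x|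

/-- `p` is a probability mass function. -/
def isProb {X : Type*} [Fintype X] (p : X → ℝ) : Prop := (∀ x, 0 ≤ p x) ∧ ∑ x, p x = 1

/-- One step of the state-distribution dynamics under policy `π` and kernel `P`. -/
def stepKernel {S A : Type*} [Fintype S] [Fintype A]
    (P : S → A → S → ℝ) (π : S → A → ℝ) (ν : S → ℝ) : S → ℝ :=
  fun s' => ∑ s, ν s * ∑ a, π s a * P s a s'

/-- Discounted state occupancy measure `d_μ^π(s) = (1-γ) ∑_t γ^t P(s_t = s)`. -/
def occ {S A : Type*} [Fintype S] [Fintype A]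
    (γ : ℝ) (P : S → A → S → ℝ) (π : S → A → ℝ) (μ : S → ℝ) : S → ℝ :=
  fun s => (1 - γ) * ∑' t : ℕ, γ ^ t * ((stepKernel P π)^[t] μ) s

section Aux
variable {S A : Type*} [Fintype S] [Fintype A]

lemma tv_nonneg {X : Type*} [Fintype X] (p q : X → ℝ) : 0 ≤ tv p q := by
  unfold tv; positivity

lemma tv_symm {X : Type*} [Fintype X] (p q : X → ℝ) : tv p q = tv q p := by
  unfold tv; congr 1; exact Finset.sum_congr rfl fun x _ => abs_sub_comm _ _

lemma tv_self {X : Type*} [Fintype X] (p : X → ℝ) : tv p p = 0 := by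
  simp [tv]

lemma tv_triangle {X : Type*} [Fintype X] (p q r : X → ℝ) : tv p r ≤ tv p q + tv q r := by
  unfold tv
  rw [← mul_add, ← Finset.sum_add_distrib]
  refine mul_le_mul_of_nonneg_left (Finset.sum_le_sum fun x _ => ?_) (by norm_num)
  exact abs_sub_le _ _ _

lemma row_sum (P : S → A → S → ℝ) (hP : ∀ s a, isProb (P s a))
    (π : S → A → ℝ) (hπ : ∀ s, isProb (π s)) (s : S) :
    ∑ s', ∑ a, π s a * P s a s' = 1 := by
  rw [Finset.sum_comm]
  simp [← Finset.mul_sum, (hP s _).2, (hπ s).2]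

lemma stepKernel_prob (P : S → A → S → ℝ) (hP : ∀ s a, isProb (P s a))
    (π : S → A → ℝ) (hπ : ∀ s, isProb (π s)) (ν : S → ℝ) (hν : isProb ν) :
    isProb (stepKernel P π ν) := by
  constructor
  · intro s'
    apply Finset.sum_nonneg; intro s _
    exact mul_nonneg (hν.1 s) (Finset.sum_nonneg fun a _ =>
      mul_nonneg ((hπ s).1 a) ((hP s a).1 s'))
  · unfold stepKernel
    rw [Finset.sum_comm]
    calc ∑ s, ∑ s', ν s * ∑ a, π s a * P s a s'
        = ∑ s, ν s * ∑ s', ∑ a, π s a * P s a s' := by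
          simp [Finset.mul_sum]
      _ = 1 := by simp [row_sum P hP π hπ, hν.2]

lemma iter_prob (P : S → A → S → ℝ) (hP : ∀ s a, isProb (P s a))
    (π : S → A → ℝ) (hπ : ∀ s, isProb (π s)) (μ : S → ℝ) (hμ : isProb μ) (n : ℕ) :
    isProb ((stepKernel P π)^[n] μ) := by
  induction n with
  | zero => simpa
  | succ n ih =>
    rw [Function.iterate_succ_apply']
    exact stepKernel_prob P hP π hπ _ ih

lemma step_contract (P : S → A → S → ℝ) (hP : ∀ s a, isProb (P s a))
    (π : S → A → ℝ) (hπ : ∀ s, isProb (π s)) (x y : S → ℝ) :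
    ∑ s', |stepKernel P π x s' - stepKernel P π y s'| ≤ ∑ s, |x s - y s| := by
  have key : ∀ s', |stepKernel P π x s' - stepKernel P π y s'|
      ≤ ∑ s, |x s - y s| * ∑ a, π s a * P s a s' := by
    intro s'
    unfold stepKernel
    rw [← Finset.sum_sub_distrib]
    refine (Finset.abs_sum_le_sum_abs _ _).trans ?_
    apply Finset.sum_le_sum; intro s _
    rw [← sub_mul, abs_mul, abs_of_nonneg (Finset.sum_nonneg fun a _ =>
      mul_nonneg ((hπ s).1 a) ((hP s a).1 s'))]
  calc ∑ s', |stepKernel P π x s' - stepKernel P π y s'|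
      ≤ ∑ s', ∑ s, |x s - y s| * ∑ a, π s a * P s a s' :=
        Finset.sum_le_sum fun s' _ => key s'
    _ = ∑ s, |x s - y s| * ∑ s', ∑ a, π s a * P s a s' := by
        rw [Finset.sum_comm]; simp [Finset.mul_sum]
    _ = ∑ s, |x s - y s| := by simp [row_sum P hP π hπ]

lemma step_policy_diff (P : S → A → S → ℝ) (hP : ∀ s a, isProb (P s a))
    (π' π : S → A → ℝ) (hπ' : ∀ s, isProb (π' s)) (hπ : ∀ s, isProb (π s))
    (y : S → ℝ) (hy : isProb y) (Δ : ℝ) (hΔ : ∀ s, tv (π' s) (π s) ≤ Δ) :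
    ∑ s', |stepKernel P π' y s' - stepKernel P π y s'| ≤ 2 * Δ := by
  have key : ∀ s', |stepKernel P π' y s' - stepKernel P π y s'|
      ≤ ∑ s, y s * ∑ a, |π' s a - π s a| * P s a s' := by
    intro s'
    unfold stepKernel
    rw [← Finset.sum_sub_distrib]
    refine (Finset.abs_sum_le_sum_abs _ _).trans ?_
    apply Finset.sum_le_sum; intro s _
    rw [← mul_sub, abs_mul, abs_of_nonneg (hy.1 s), ← Finset.sum_sub_distrib]
    refine mul_le_mul_of_nonneg_left ?_ (hy.1 s)
    refine (Finset.abs_sum_le_sum_abs _ _).trans ?_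
    apply Finset.sum_le_sum; intro a _
    rw [← sub_mul, abs_mul, abs_of_nonneg ((hP s a).1 s')]
  calc ∑ s', |stepKernel P π' y s' - stepKernel P π y s'|
      ≤ ∑ s', ∑ s, y s * ∑ a, |π' s a - π s a| * P s a s' :=
        Finset.sum_le_sum fun s' _ => key s'
    _ = ∑ s, y s * ∑ a, |π' s a - π s a| := by
        rw [Finset.sum_comm]
        refine Finset.sum_congr rfl fun s _ => ?_
        rw [← Finset.mul_sum, Finset.sum_comm]
        congr 1
        refine Finset.sum_congr rfl fun a _ => ?_
        rw [← Finset.mul_sum, (hP s a).2, mul_one]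
    _ ≤ ∑ s, y s * (2 * Δ) := by
        apply Finset.sum_le_sum; intro s _
        refine mul_le_mul_of_nonneg_left ?_ (hy.1 s)
        have := hΔ s
        unfold tv at this
        linarith
    _ = 2 * Δ := by rw [← Finset.sum_mul, hy.2, one_mul]

lemma iter_diff (P : S → A → S → ℝ) (hP : ∀ s a, isProb (P s a))
    (π' π : S → A → ℝ) (hπ' : ∀ s, isProb (π' s)) (hπ : ∀ s, isProb (π s))
    (μ : S → ℝ) (hμ : isProb μ) (Δ : ℝ) (hΔ : ∀ s, tv (π' s) (π s) ≤ Δ) (n : ℕ) :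
    ∑ s, |(stepKernel P π')^[n] μ s - (stepKernel P π)^[n] μ s| ≤ n * (2 * Δ) := by
  induction n with
  | zero => simp
  | succ n ih =>
    rw [Function.iterate_succ_apply', Function.iterate_succ_apply']
    have tri : ∑ s, |stepKernel P π' ((stepKernel P π')^[n] μ) s
        - stepKernel P π ((stepKernel P π)^[n] μ) s|
        ≤ (∑ s, |stepKernel P π' ((stepKernel P π')^[n] μ) s
            - stepKernel P π' ((stepKernel P π)^[n] μ) s|)
        + ∑ s, |stepKernel P π' ((stepKernel P π)^[n] μ) s
            - stepKernel P π ((stepKernel P π)^[n] μ) s| := by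
      rw [← Finset.sum_add_distrib]
      apply Finset.sum_le_sum; intro s _
      exact abs_sub_le _ _ _
    refine tri.trans ?_
    have h1 := step_contract P hP π' hπ' ((stepKernel P π')^[n] μ) ((stepKernel P π)^[n] μ)
    have h2 := step_policy_diff P hP π' π hπ' hπ _ (iter_prob P hP π hπ μ hμ n) Δ hΔ
    push_cast
    nlinarith [ih]

end Aux

section Occ
variable {S A : Type*} [Fintype S] [Fintype A]

lemma prob_le_one {X : Type*} [Fintype X] (p : X → ℝ) (hp : isProb p) (x : X) : p x ≤ 1 := by
  rw [← hp.2]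
  exact Finset.single_le_sum (fun y _ => hp.1 y) (Finset.mem_univ x)

lemma occ_tv (γ : ℝ) (hγ0 : 0 < γ) (hγ1 : γ < 1)
    (P : S → A → S → ℝ) (hP : ∀ s a, isProb (P s a))
    (π' π : S → A → ℝ) (hπ' : ∀ s, isProb (π' s)) (hπ : ∀ s, isProb (π s))
    (μ : S → ℝ) (hμ : isProb μ)
    (Δ : ℝ) (hΔ : ∀ s, tv (π' s) (π s) ≤ Δ) (hΔ0 : 0 ≤ Δ) :
    tv (occ γ P π' μ) (occ γ P π μ) ≤ γ / (1 - γ) * Δ := by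
  have h1γ : (0:ℝ) < 1 - γ := by linarith
  have hγn : ‖γ‖ < 1 := by rw [Real.norm_eq_abs, abs_of_pos hγ0]; exact hγ1
  set ν' := fun n => (stepKernel P π')^[n] μ with hν'def
  set ν := fun n => (stepKernel P π)^[n] μ with hνdef
  have hν' : ∀ n, isProb (ν' n) := iter_prob P hP π' hπ' μ hμ
  have hν : ∀ n, isProb (ν n) := iter_prob P hP π hπ μ hμ
  set g : ℕ → S → ℝ := fun n s => γ ^ n * |ν' n s - ν n s| with hgdef
  have hgnn : ∀ n s, 0 ≤ g n s := fun n s =>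
    mul_nonneg (pow_pos hγ0 n).le (abs_nonneg _)
  have hgle : ∀ n s, g n s ≤ 2 * γ ^ n := by
    intro n s
    have h1 : |ν' n s - ν n s| ≤ 2 := by
      have := (hν' n).1 s; have := (hν n).1 s
      have := prob_le_one _ (hν' n) s; have := prob_le_one _ (hν n) s
      rw [abs_le]; constructor <;> linarith
    calc g n s ≤ γ ^ n * 2 := mul_le_mul_of_nonneg_left h1 (pow_pos hγ0 n).le
      _ = 2 * γ ^ n := by ring
  have hgeom : Summable (fun n : ℕ => 2 * γ ^ n) :=
    (summable_geometric_of_lt_one hγ0.le hγ1).mul_left 2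
  have hgsum : ∀ s, Summable (fun n => g n s) := fun s =>
    Summable.of_nonneg_of_le (fun n => hgnn n s) (fun n => hgle n s) hgeom
  have hsum' : ∀ s, Summable (fun n => γ ^ n * ν' n s) := by
    intro s
    refine Summable.of_nonneg_of_le (fun n => mul_nonneg (pow_pos hγ0 n).le ((hν' n).1 s))
      (fun n => ?_) (summable_geometric_of_lt_one hγ0.le hγ1)
    calc γ ^ n * ν' n s ≤ γ ^ n * 1 :=
        mul_le_mul_of_nonneg_left (prob_le_one _ (hν' n) s) (pow_pos hγ0 n).le
      _ = γ ^ n := mul_one _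
  have hsum : ∀ s, Summable (fun n => γ ^ n * ν n s) := by
    intro s
    refine Summable.of_nonneg_of_le (fun n => mul_nonneg (pow_pos hγ0 n).le ((hν n).1 s))
      (fun n => ?_) (summable_geometric_of_lt_one hγ0.le hγ1)
    calc γ ^ n * ν n s ≤ γ ^ n * 1 :=
        mul_le_mul_of_nonneg_left (prob_le_one _ (hν n) s) (pow_pos hγ0 n).le
      _ = γ ^ n := mul_one _
  -- pointwise bound on |occ' s - occ s|
  have hpt : ∀ s, |occ γ P π' μ s - occ γ P π μ s| ≤ (1 - γ) * ∑' n, g n s := by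
    intro s
    have : occ γ P π' μ s - occ γ P π μ s
        = (1 - γ) * ∑' n, (γ ^ n * ν' n s - γ ^ n * ν n s) := by
      unfold occ
      rw [Summable.tsum_sub (hsum' s) (hsum s)]
      ring
    rw [this, abs_mul, abs_of_pos h1γ]
    refine mul_le_mul_of_nonneg_left ?_ h1γ.le
    have hnorm : Summable (fun n => ‖γ ^ n * ν' n s - γ ^ n * ν n s‖) := by
      have : (fun n => ‖γ ^ n * ν' n s - γ ^ n * ν n s‖) = fun n => g n s := by
        funext n
        rw [Real.norm_eq_abs, ← mul_sub, abs_mul, abs_of_pos (pow_pos hγ0 n)]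
      rw [this]; exact hgsum s
    refine (norm_tsum_le_tsum_norm hnorm).trans_eq ?_
    congr 1; funext n
    rw [Real.norm_eq_abs, ← mul_sub, abs_mul, abs_of_pos (pow_pos hγ0 n)]
  -- sum the bound
  have hGsummable : Summable (fun n => ∑ s : S, g n s) := by
    have hcg : Summable (fun n : ℕ => (Fintype.card S : ℝ) * (2 * γ ^ n)) :=
      hgeom.mul_left _
    refine Summable.of_nonneg_of_le
      (fun n => Finset.sum_nonneg fun s _ => hgnn n s) (fun n => ?_) hcg
    calc ∑ s : S, g n s ≤ ∑ s : S, 2 * γ ^ n :=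
        Finset.sum_le_sum fun s _ => hgle n s
      _ = (Fintype.card S) * (2 * γ ^ n) := by
        rw [Finset.sum_const, Finset.card_univ, nsmul_eq_mul]
  have hswap : ∑ s : S, ∑' n, g n s = ∑' n, ∑ s : S, g n s :=
    (Summable.tsum_finsetSum (fun s _ => hgsum s)).symm
  have hGbound : ∀ n, ∑ s : S, g n s ≤ (n : ℝ) * (2 * Δ) * γ ^ n := by
    intro n
    have := iter_diff P hP π' π hπ' hπ μ hμ Δ hΔ n
    calc ∑ s : S, g n s = γ ^ n * ∑ s : S, |ν' n s - ν n s| := by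
          rw [Finset.mul_sum]
      _ ≤ γ ^ n * ((n : ℝ) * (2 * Δ)) :=
          mul_le_mul_of_nonneg_left this (pow_pos hγ0 n).le
      _ = (n : ℝ) * (2 * Δ) * γ ^ n := by ring
  have hRsummable : Summable (fun n : ℕ => (n : ℝ) * (2 * Δ) * γ ^ n) := by
    have := summable_pow_mul_geometric_of_norm_lt_one 1 hγn (R := ℝ)
    simpa [mul_comm, mul_assoc, mul_left_comm] using this.mul_left (2 * Δ)
  have htsum : ∑' n, ∑ s : S, g n s ≤ 2 * Δ * (γ / (1 - γ) ^ 2) := by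
    calc ∑' n, ∑ s : S, g n s ≤ ∑' n : ℕ, (n : ℝ) * (2 * Δ) * γ ^ n :=
        Summable.tsum_le_tsum hGbound hGsummable hRsummable
      _ = (2 * Δ) * ∑' n : ℕ, (n : ℝ) * γ ^ n := by
          rw [← tsum_mul_left]; congr 1; funext n; ring
      _ = 2 * Δ * (γ / (1 - γ) ^ 2) := by
          rw [tsum_coe_mul_geometric_of_norm_lt_one hγn]
  calc tv (occ γ P π' μ) (occ γ P π μ)
      ≤ (1/2) * ∑ s : S, (1 - γ) * ∑' n, g n s := by
        unfold tv
        refine mul_le_mul_of_nonneg_left (Finset.sum_le_sum fun s _ => hpt s) (by norm_num)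
    _ = (1/2) * (1 - γ) * ∑' n, ∑ s : S, g n s := by
        rw [← Finset.mul_sum, hswap]; ring
    _ ≤ (1/2) * (1 - γ) * (2 * Δ * (γ / (1 - γ) ^ 2)) := by
        refine mul_le_mul_of_nonneg_left htsum (by positivity)
    _ = γ / (1 - γ) * Δ := by
        field_simp
end Occ

lemma tv_avg {X : Type*} [Fintype X] (K : ℕ) (hK : 0 < K) (p : ℕ → X → ℝ) (q : X → ℝ) :
    tv (fun x => (1 / (K:ℝ)) * ∑ h ∈ Finset.range K, p h x) q
      ≤ (1 / (K:ℝ)) * ∑ h ∈ Finset.range K, tv (p h) q := by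
  have hK0 : (0:ℝ) < K := Nat.cast_pos.2 hK
  unfold tv
  have key : ∀ x, |(1 / (K:ℝ)) * ∑ h ∈ Finset.range K, p h x - q x|
      ≤ (1 / (K:ℝ)) * ∑ h ∈ Finset.range K, |p h x - q x| := by
    intro x
    have h1 : (1 / (K:ℝ)) * ∑ h ∈ Finset.range K, p h x - q x
        = (1 / (K:ℝ)) * ∑ h ∈ Finset.range K, (p h x - q x) := by
      rw [Finset.sum_sub_distrib, Finset.sum_const, Finset.card_range, nsmul_eq_mul]
      field_simp
    rw [h1, abs_mul, abs_of_pos (by positivity : (0:ℝ) < 1/(K:ℝ))]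
    exact mul_le_mul_of_nonneg_left (Finset.abs_sum_le_sum_abs _ _) (by positivity)
  calc (1/2 : ℝ) * ∑ x, |(1 / (K:ℝ)) * ∑ h ∈ Finset.range K, p h x - q x|
      ≤ (1/2) * ∑ x, (1 / (K:ℝ)) * ∑ h ∈ Finset.range K, |p h x - q x| :=
        mul_le_mul_of_nonneg_left (Finset.sum_le_sum fun x _ => key x) (by norm_num)
    _ = (1 / (K:ℝ)) * ∑ h ∈ Finset.range K, (1/2) * ∑ x, |p h x - q x| := by
        simp only [Finset.mul_sum]
        rw [Finset.sum_comm]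
        exact Finset.sum_congr rfl fun h _ => Finset.sum_congr rfl fun x _ => by ring

lemma double_sum_le (f : ℕ → ℝ) (hf : ∀ j, 0 ≤ f j) (K : ℕ) :
    ∑ h ∈ Finset.range K, ∑ i ∈ Finset.range h, f (i+1)
      ≤ ∑ j ∈ Finset.range K, ((K:ℝ) - j) * f j := by
  induction K with
  | zero => simp
  | succ n ih =>
    have hrhs : ∑ j ∈ Finset.range (n+1), (((n+1:ℕ):ℝ) - j) * f j
        = (∑ j ∈ Finset.range n, ((n:ℝ) - j) * f j) + ∑ j ∈ Finset.range (n+1), f j := by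
      have h1 : ∀ j ∈ Finset.range (n+1), (((n+1:ℕ):ℝ) - j) * f j
          = ((n:ℝ) - j) * f j + f j := by intro j _; push_cast; ring
      rw [Finset.sum_congr rfl h1, Finset.sum_add_distrib,
        Finset.sum_range_succ (fun j => ((n:ℝ) - (j:ℝ)) * f j)]
      simp
    have hsum1 : ∑ j ∈ Finset.range (n+1), f j
        = (∑ i ∈ Finset.range n, f (i+1)) + f 0 := Finset.sum_range_succ' f n
    rw [Finset.sum_range_succ, hrhs, hsum1]
    have := hf 0
    linarith


/-- FIFO-Buffer Proximity Lemma: the buffer occupancy `ν_t = (1/K)∑_{h<K} d^{π_{t-h}}`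
satisfies `TV(ν_t, d^{π_t}) ≤ (γ/(1-γ)) ∑_{j<K} ((K-j)/K) Δ_{t-j}`, and in particular
`TV(ν_t, d^{π_t}) ≤ (γ/(1-γ)) ∑_{j<K} Δ_{t-j}`. -/
theorem fifo_buffer_proximity
    {S A : Type*} [Fintype S] [Fintype A] [Nonempty S]
    (γ : ℝ) (hγ0 : 0 < γ) (hγ1 : γ < 1)
    (P : S → A → S → ℝ) (hP : ∀ s a, isProb (P s a))
    (μ : S → ℝ) (hμ : isProb μ)
    (π : ℤ → S → A → ℝ) (hπ : ∀ τ s, isProb (π τ s))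
    (K : ℕ) (hK : 0 < K) (t : ℤ) :
    (tv (fun s => (1 / (K : ℝ)) * ∑ h ∈ Finset.range K, occ γ P (π (t - h)) μ s)
        (occ γ P (π t) μ)
      ≤ γ / (1 - γ) * ∑ j ∈ Finset.range K,
          (((K - j : ℝ) / K) * ⨆ s, tv (π (t - j + 1) s) (π (t - j) s))) ∧
    (tv (fun s => (1 / (K : ℝ)) * ∑ h ∈ Finset.range K, occ γ P (π (t - h)) μ s)
        (occ γ P (π t) μ)
      ≤ γ / (1 - γ) * ∑ j ∈ Finset.range K, (⨆ s, tv (π (t - j + 1) s) (π (t - j) s))) := by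
  have h1γ : (0:ℝ) < 1 - γ := by linarith
  have hc0 : 0 ≤ γ / (1 - γ) := by positivity
  have hK0 : (0:ℝ) < K := Nat.cast_pos.2 hK
  set c := γ / (1 - γ) with hcdef
  set D : ℕ → ℝ := fun j => ⨆ s, tv (π (t - (j:ℤ) + 1) s) (π (t - (j:ℤ)) s) with hDdef
  have hbdd : ∀ j : ℕ, BddAbove (Set.range fun s => tv (π (t - (j:ℤ) + 1) s) (π (t - (j:ℤ)) s)) :=
    fun j => (Set.finite_range _).bddAbove
  have hDle : ∀ (j : ℕ) (s : S), tv (π (t - (j:ℤ) + 1) s) (π (t - (j:ℤ)) s) ≤ D j :=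
    fun j s => le_ciSup (hbdd j) s
  have hDnn : ∀ j : ℕ, 0 ≤ D j := by
    intro j
    obtain ⟨s⟩ := (inferInstance : Nonempty S)
    exact (tv_nonneg _ _).trans (hDle j s)
  -- adjacent occupancy bound
  have hadj : ∀ n : ℕ,
      tv (occ γ P (π (t - ((n:ℤ)+1))) μ) (occ γ P (π (t - (n:ℤ))) μ) ≤ c * D (n+1) := by
    intro n
    refine occ_tv γ hγ0 hγ1 P hP _ _ (hπ _) (hπ _) μ hμ (D (n+1)) ?_ (hDnn _)
    intro s
    have h1 : t - (((n+1:ℕ)):ℤ) + 1 = t - (n:ℤ) := by push_cast; ring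
    have h2 : t - (((n+1:ℕ)):ℤ) = t - ((n:ℤ)+1) := by push_cast; ring
    have := hDle (n+1) s
    rw [h1, h2] at this
    rw [tv_symm]
    exact this
  -- telescoping
  have htel : ∀ h : ℕ, tv (occ γ P (π (t - (h:ℤ))) μ) (occ γ P (π t) μ)
      ≤ c * ∑ i ∈ Finset.range h, D (i+1) := by
    intro h
    induction h with
    | zero => simp [tv_self]
    | succ n ih =>
      have tri := tv_triangle (occ γ P (π (t - ((n+1:ℕ):ℤ))) μ)
        (occ γ P (π (t - (n:ℤ))) μ) (occ γ P (π t) μ)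
      have step := hadj n
      have h2 : t - (((n+1:ℕ)):ℤ) = t - ((n:ℤ)+1) := by push_cast; ring
      rw [h2] at tri
      rw [Finset.sum_range_succ, mul_add]
      have h3 : ((n+1:ℕ):ℤ) = (n:ℤ)+1 := by push_cast; ring
      rw [h3]
      linarith
  -- average bound
  have havg := tv_avg K hK (fun h => occ γ P (π (t - (h:ℤ))) μ) (occ γ P (π t) μ)
  have hmain : tv (fun s => (1 / (K : ℝ)) * ∑ h ∈ Finset.range K, occ γ P (π (t - h)) μ s)
        (occ γ P (π t) μ)
      ≤ c * ∑ j ∈ Finset.range K, (((K - j : ℝ) / K) * D j) := by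
    refine havg.trans ?_
    calc (1 / (K:ℝ)) * ∑ h ∈ Finset.range K, tv (occ γ P (π (t - (h:ℤ))) μ) (occ γ P (π t) μ)
        ≤ (1 / (K:ℝ)) * ∑ h ∈ Finset.range K, (c * ∑ i ∈ Finset.range h, D (i+1)) := by
          refine mul_le_mul_of_nonneg_left (Finset.sum_le_sum fun h _ => htel h) (by positivity)
      _ = c * ((1 / (K:ℝ)) * ∑ h ∈ Finset.range K, ∑ i ∈ Finset.range h, D (i+1)) := by
          rw [← Finset.mul_sum]; ring
      _ ≤ c * ((1 / (K:ℝ)) * ∑ j ∈ Finset.range K, ((K:ℝ) - j) * D j) := by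
          refine mul_le_mul_of_nonneg_left (mul_le_mul_of_nonneg_left
            (double_sum_le D hDnn K) (by positivity)) hc0
      _ = c * ∑ j ∈ Finset.range K, (((K - j : ℝ) / K) * D j) := by
          congr 1
          rw [Finset.mul_sum]
          refine Finset.sum_congr rfl fun j _ => ?_
          field_simp
  refine ⟨hmain, hmain.trans ?_⟩
  refine mul_le_mul_of_nonneg_left (Finset.sum_le_sum fun j hj => ?_) hc0
  have hjK : (j:ℝ) < K := by exact_mod_cast Finset.mem_range.mp hj
  have hle1 : ((K:ℝ) - j) / K ≤ 1 := by
    rw [div_le_one hK0]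
    have : (0:ℝ) ≤ (j:ℝ) := Nat.cast_nonneg j
    linarith
  exact (mul_le_of_le_one_left (hDnn j) hle1)
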